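/- If G is a triangle-free graph of diameter 2, v is a degree-2 vertex with neighbors v₁,v₂, and the sets S₁ = N(v₁)\(N(v₂)∪{v}) and S₂ = N(v₂)\(N(v₁)∪{v}) both have size at least 3, then G contains K_{4,4} minus an edge as a subgraph (hence as a minor). -/
import Mathlib
set_option maxHeartbeats 1000000


/-- `K_{4,4}` minus one edge (the edge between `inl 0` and `inr 0`). -/
def K44minus : SimpleGraph (Fin 4 ⊕ Fin 4) :=
  SimpleGraph.fromRel (fun a b =>
    match a, b with
    | Sum.inl i, Sum.inr j => ¬ (i = 0 ∧ j = 0)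
    | _, _ => False)

lemma three_distinct {α : Type*} {s : Set α} (h : 3 ≤ s.ncard) :
    ∃ x y z, x ≠ y ∧ x ≠ z ∧ y ≠ z ∧ x ∈ s ∧ y ∈ s ∧ z ∈ s := by
  obtain ⟨t, hts, ht⟩ := Set.exists_subset_card_eq h
  obtain ⟨x, y, z, hxy, hxz, hyz, rfl⟩ := Set.ncard_eq_three.mp ht
  exact ⟨x, y, z, hxy, hxz, hyz, hts (by simp), hts (by simp), hts (by simp)⟩

/-- In a triangle-free graph of diameter 2 with a degree-2
vertex `v` with neighbors `v₁, v₂`, if `|S₁| ≥ 3` and `|S₂| ≥ 3`, then `G`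
contains `K_{4,4}` minus an edge as a subgraph. -/
theorem stmt_13 {V : Type*} [Fintype V] (G : SimpleGraph V)
    (htf : G.CliqueFree 3)
    (hdiam : ∀ a b : V, a ≠ b → ¬ G.Adj a b → ∃ w, G.Adj a w ∧ G.Adj w b)
    (v v₁ v₂ : V) (hne : v₁ ≠ v₂)
    (hnbr : G.neighborSet v = {v₁, v₂})
    (hS1 : 3 ≤ (G.neighborSet v₁ \ (G.neighborSet v₂ ∪ {v})).ncard)
    (hS2 : 3 ≤ (G.neighborSet v₂ \ (G.neighborSet v₁ ∪ {v})).ncard) :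
    ∃ f : Fin 4 ⊕ Fin 4 → V, Function.Injective f ∧
      ∀ a b, K44minus.Adj a b → G.Adj (f a) (f b) := by
  classical
  have tri : ∀ {a b c : V}, G.Adj a b → G.Adj a c → G.Adj b c → False := by
    intro a b c hab hac hbc
    exact htf _ (SimpleGraph.is3Clique_triple_iff.mpr ⟨hab, hac, hbc⟩)
  have hv1 : G.Adj v v₁ := by
    have : v₁ ∈ G.neighborSet v := by rw [hnbr]; simp
    exact this
  have hv2 : G.Adj v v₂ := by
    have : v₂ ∈ G.neighborSet v := by rw [hnbr]; simp
    exact this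
  set S₁ := G.neighborSet v₁ \ (G.neighborSet v₂ ∪ {v}) with hS₁def
  set S₂ := G.neighborSet v₂ \ (G.neighborSet v₁ ∪ {v}) with hS₂def
  -- basic membership facts
  have memS₁ : ∀ x ∈ S₁, G.Adj v₁ x ∧ ¬ G.Adj v₂ x ∧ x ≠ v := by
    intro x hx
    obtain ⟨h1, h2⟩ := hx
    simp only [Set.mem_union, Set.mem_singleton_iff, not_or] at h2
    exact ⟨h1, fun h => h2.1 h, h2.2⟩
  have memS₂ : ∀ x ∈ S₂, G.Adj v₂ x ∧ ¬ G.Adj v₁ x ∧ x ≠ v := by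
    intro x hx
    obtain ⟨h1, h2⟩ := hx
    simp only [Set.mem_union, Set.mem_singleton_iff, not_or] at h2
    exact ⟨h1, fun h => h2.1 h, h2.2⟩
  -- every vertex of S₁ is adjacent to every vertex of S₂
  have hv1v2 : ¬ G.Adj v₁ v₂ := fun h => tri hv1 hv2 h
  have key : ∀ x ∈ S₁, ∀ y ∈ S₂, G.Adj x y := by
    intro x hx y hy
    obtain ⟨hx1, hx2, hxv⟩ := memS₁ x hx
    obtain ⟨hy1, hy2, hyv⟩ := memS₂ y hy
    by_contra hxy
    have hxyne : x ≠ y := by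
      rintro rfl; exact hy2 hx1
    obtain ⟨w, hw1, hw2⟩ := hdiam x y hxyne hxy
    -- w ≠ v₁, v₂, v
    have hwv1 : w ≠ v₁ := by rintro rfl; exact hy2 hw2
    have hwv2 : w ≠ v₂ := by rintro rfl; exact hx2 hw1.symm
    have hwv : w ≠ v := by
      intro h
      rw [h] at hw1
      have hx' : x ∈ G.neighborSet v := hw1.symm
      rw [hnbr] at hx'
      rcases hx' with h' | h'
      · exact G.irrefl (h' ▸ hx1)
      · simp only [Set.mem_singleton_iff] at h'
        subst h'
        exact hv1v2 hx1
    have hwvadj : ¬ G.Adj v w := by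
      intro h
      have : w ∈ G.neighborSet v := h
      rw [hnbr] at this
      rcases this with h' | h'
      · exact hwv1 h'
      · exact hwv2 h'
    obtain ⟨u, hu1, hu2⟩ := hdiam v w (Ne.symm hwv) hwvadj
    have : u ∈ G.neighborSet v := hu1
    rw [hnbr] at this
    rcases this with h' | h'
    · subst h'
      exact (tri hu2 hx1 hw1.symm).elim
    · simp only [Set.mem_singleton_iff] at h'
      subst h'
      exact tri hu2 hy1 hw2 |>.elim
  obtain ⟨a1, a2, a3, ha12, ha13, ha23, ha1, ha2, ha3⟩ := three_distinct hS1
  obtain ⟨b1, b2, b3, hb12, hb13, hb23, hb1, hb2, hb3⟩ := three_distinct hS2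
  -- distinctness facts
  have hv1S1 : v₁ ∉ S₁ := fun h => G.irrefl (memS₁ _ h).1
  have hv2S2 : v₂ ∉ S₂ := fun h => G.irrefl (memS₂ _ h).1
  have hv1S2 : v₁ ∉ S₂ := fun h => hv1v2 (memS₂ _ h).1.symm
  have hv2S1 : v₂ ∉ S₁ := fun h => hv1v2 ((memS₁ _ h).1 : G.Adj v₁ v₂)
  have hdisj : ∀ x ∈ S₁, ∀ y ∈ S₂, x ≠ y := by
    rintro x hx y hy rfl
    exact (memS₂ _ hy).2.1 (memS₁ _ hx).1
  have nv1b1 : v₁ ≠ b1 := fun h => hv1S2 (h ▸ hb1)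
  have nv1b2 : v₁ ≠ b2 := fun h => hv1S2 (h ▸ hb2)
  have nv1b3 : v₁ ≠ b3 := fun h => hv1S2 (h ▸ hb3)
  have nv2a1 : v₂ ≠ a1 := fun h => hv2S1 (h ▸ ha1)
  have nv2a2 : v₂ ≠ a2 := fun h => hv2S1 (h ▸ ha2)
  have nv2a3 : v₂ ≠ a3 := fun h => hv2S1 (h ▸ ha3)
  have nv1a1 : v₁ ≠ a1 := fun h => hv1S1 (h ▸ ha1)
  have nv1a2 : v₁ ≠ a2 := fun h => hv1S1 (h ▸ ha2)
  have nv1a3 : v₁ ≠ a3 := fun h => hv1S1 (h ▸ ha3)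
  have nv2b1 : v₂ ≠ b1 := fun h => hv2S2 (h ▸ hb1)
  have nv2b2 : v₂ ≠ b2 := fun h => hv2S2 (h ▸ hb2)
  have nv2b3 : v₂ ≠ b3 := fun h => hv2S2 (h ▸ hb3)
  have nb1a1 : b1 ≠ a1 := (hdisj _ ha1 _ hb1 ·.symm)
  have nb1a2 : b1 ≠ a2 := (hdisj _ ha2 _ hb1 ·.symm)
  have nb1a3 : b1 ≠ a3 := (hdisj _ ha3 _ hb1 ·.symm)
  have nb2a1 : b2 ≠ a1 := (hdisj _ ha1 _ hb2 ·.symm)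
  have nb2a2 : b2 ≠ a2 := (hdisj _ ha2 _ hb2 ·.symm)
  have nb2a3 : b2 ≠ a3 := (hdisj _ ha3 _ hb2 ·.symm)
  have nb3a1 : b3 ≠ a1 := (hdisj _ ha1 _ hb3 ·.symm)
  have nb3a2 : b3 ≠ a2 := (hdisj _ ha2 _ hb3 ·.symm)
  have nb3a3 : b3 ≠ a3 := (hdisj _ ha3 _ hb3 ·.symm)
  have av1 : ∀ x ∈ S₁, G.Adj v₁ x := fun x hx => (memS₁ x hx).1
  have av2 : ∀ x ∈ S₂, G.Adj v₂ x := fun x hx => (memS₂ x hx).1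
  refine ⟨Sum.elim ![v₁, b1, b2, b3] ![v₂, a1, a2, a3], ?_, ?_⟩
  · intro a b hab
    rcases a with i | i <;> rcases b with j | j <;> fin_cases i <;> fin_cases j <;>
      simp only [Sum.elim_inl, Sum.elim_inr, Matrix.cons_val_zero, Matrix.cons_val_one,
        Matrix.head_cons, Matrix.cons_val_two, Matrix.tail_cons, Matrix.cons_val_three,
        Fin.isValue] at hab <;>
      first
        | rfl
        | exact absurd hab (by assumption)
        | exact absurd hab.symm (by assumption)
  · intro a b hab
    rcases a with i | i <;> rcases b with j | j <;> fin_cases i <;> fin_cases j <;>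
      simp only [K44minus, SimpleGraph.fromRel_adj, ne_eq, Sum.inl.injEq, Sum.inr.injEq,
        not_and, reduceCtorEq, false_or, or_false, and_imp, not_true_eq_false, not_false_eq_true,
        and_false, false_and, and_true, true_and, or_self, Fin.isValue] at hab <;>
      first
        | exact hab.elim
        | exact (hab rfl rfl).elim
        | exact av1 _ ha1 | exact av1 _ ha2 | exact av1 _ ha3
        | exact av2 _ hb1 | exact av2 _ hb2 | exact av2 _ hb3
        | exact (av1 _ ha1).symm | exact (av1 _ ha2).symm | exact (av1 _ ha3).symm
        | exact (av2 _ hb1).symm | exact (av2 _ hb2).symm | exact (av2 _ hb3).symm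
        | exact (key _ ha1 _ hb1).symm | exact (key _ ha1 _ hb2).symm | exact (key _ ha1 _ hb3).symm
        | exact (key _ ha2 _ hb1).symm | exact (key _ ha2 _ hb2).symm | exact (key _ ha2 _ hb3).symm
        | exact (key _ ha3 _ hb1).symm | exact (key _ ha3 _ hb2).symm | exact (key _ ha3 _ hb3).symm
        | exact key _ ha1 _ hb1 | exact key _ ha1 _ hb2 | exact key _ ha1 _ hb3
        | exact key _ ha2 _ hb1 | exact key _ ha2 _ hb2 | exact key _ ha2 _ hb3
        | exact key _ ha3 _ hb1 | exact key _ ha3 _ hb2 | exact key _ ha3 _ hb3
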